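/- Let d ≥ 1 and let A : (Fin d → ℝ) → Matrix (Fin d) (Fin d) ℝ be such that A v is a graph Laplacian whenever v ⪰ 0. Let h ≥ 0, and let y₀ ∈ ℝ^d satisfy y₀ ⪰ 0 and ∑_i (y₀)_i = 1. Then the second-order exponential midpoint update y₁ = exp(h·A(exp((h/2)·A y₀) *ᵥ y₀)) *ᵥ y₀ satisfies y₁ ⪰ 0 and ∑_i (y₁)_i = 1. -/

import Mathlib

open Matrix

/-- An `n × n` real matrix is a graph Laplacian if its off-diagonal entries are
nonnegative, its diagonal entries are nonpositive, and each column sums to zero. -/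
def IsGraphLaplacian {n : ℕ} (A : Matrix (Fin n) (Fin n) ℝ) : Prop :=
  (∀ k ℓ : Fin n, k ≠ ℓ → 0 ≤ A k ℓ) ∧ (∀ k : Fin n, A k k ≤ 0) ∧
    (∀ ℓ : Fin n, ∑ k : Fin n, A k ℓ = 0)

/-!
Both stages of the midpoint method multiply `y₀` by the exponential of a nonnegatively scaled graph
Laplacian, and such exponentials are column-stochastic. Positivity: adding `c • 1` to a matrix
with nonnegative off-diagonal entries makes it entrywise nonnegative, and then
`exp M = exp (-c) • exp (M + c • 1)` is a positive multiple of a series with nonnegative terms.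
Mass: zero column sums say `1 ᵥ* M = 0`, so every term of `1 ᵥ* exp M` beyond the zeroth vanishes.
The intermediate state is only fed into `A`, which is legitimate because it is again nonnegative.
-/

namespace Matrix

open NormedSpace

variable {ι : Type*} [Fintype ι] [DecidableEq ι]

theorem vecMul_pow_eq_zero {α : Type*} [Semiring α] {M : Matrix ι ι α} {v : ι → α}
    (hv : v ᵥ* M = 0) {k : ℕ} (hk : k ≠ 0) : v ᵥ* (M ^ k) = 0 := by
  obtain ⟨k, rfl⟩ := Nat.exists_eq_succ_of_ne_zero hk
  rw [pow_succ', ← vecMul_vecMul, hv, zero_vecMul]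

theorem vecMul_exp_of_vecMul_eq_zero {𝕂 : Type*} [RCLike 𝕂] {M : Matrix ι ι 𝕂} {v : ι → 𝕂}
    (hv : v ᵥ* M = 0) : v ᵥ* exp M = v := by
  open scoped Norms.Operator in
  have hs := (exp_series_hasSum_exp' (𝕂 := 𝕂) M).map (vecMulBilin 𝕂 𝕂 v)
    (LinearMap.continuous_of_finiteDimensional _)
  refine hs.unique ?_
  convert hasSum_single 0 fun k hk => ?_ using 1
  · simp
  · simp [vecMul_pow_eq_zero hv hk]

theorem hasSum_exp_apply (M : Matrix ι ι ℝ) (i j : ι) :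
    HasSum (fun k : ℕ => (k.factorial : ℝ)⁻¹ * (M ^ k) i j) (exp M i j) := by
  open scoped Norms.Operator in
  exact Pi.hasSum.1 (Pi.hasSum.1 (exp_series_hasSum_exp' (𝕂 := ℝ) M) i) j

theorem exp_apply_nonneg_of_nonneg {M : Matrix ι ι ℝ} (hM : ∀ i j, 0 ≤ M i j) (i j : ι) :
    0 ≤ exp M i j :=
  (hasSum_exp_apply M i j).nonneg fun k => mul_nonneg (by positivity) (pow_apply_nonneg hM k i j)

theorem exp_algebraMap_real (c : ℝ) :
    exp (algebraMap ℝ (Matrix ι ι ℝ) c) = algebraMap ℝ _ (Real.exp c) := by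
  open scoped Norms.Operator in
  exact Real.exp_eq_exp_ℝ ▸ (algebraMap_exp_comm c).symm

theorem exp_apply_nonneg_of_offDiag_nonneg {M : Matrix ι ι ℝ}
    (hM : ∀ i j, i ≠ j → 0 ≤ M i j) (i j : ι) : 0 ≤ exp M i j := by
  obtain ⟨c, hc⟩ : ∃ c : ℝ, ∀ i, -c ≤ M i i :=
    ⟨∑ i, |M i i|, fun i => neg_le.1 <| (neg_le_abs _).trans <|
      Finset.single_le_sum (fun i _ => abs_nonneg (M i i)) (Finset.mem_univ i)⟩
  have hshift : ∀ i j, 0 ≤ (M + algebraMap ℝ (Matrix ι ι ℝ) c) i j := by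
    intro i j
    rcases eq_or_ne i j with rfl | hij
    · simpa [algebraMap_matrix_apply, neg_le_iff_add_nonneg] using hc i
    · simpa [algebraMap_matrix_apply, hij] using hM i j hij
  have hexp : exp M = Real.exp (-c) • exp (M + algebraMap ℝ (Matrix ι ι ℝ) c) := by
    rw [Algebra.smul_def, ← exp_algebraMap_real,
      ← exp_add_of_commute _ _ (Algebra.commute_algebraMap_left _ _), map_neg,
      neg_add_cancel_comm_assoc]
  rw [hexp, Matrix.smul_apply, smul_eq_mul]
  exact mul_nonneg (Real.exp_nonneg _) (exp_apply_nonneg_of_nonneg hshift i j)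

end Matrix

namespace IsGraphLaplacian

open NormedSpace

variable {n : ℕ} {L : Matrix (Fin n) (Fin n) ℝ}

theorem smul (hL : IsGraphLaplacian L) {t : ℝ} (ht : 0 ≤ t) : IsGraphLaplacian (t • L) := by
  obtain ⟨hoff, hdiag, hcol⟩ := hL
  refine ⟨fun k ℓ hkℓ => mul_nonneg ht (hoff k ℓ hkℓ),
    fun k => mul_nonpos_of_nonneg_of_nonpos ht (hdiag k), fun ℓ => ?_⟩
  simp only [Matrix.smul_apply, smul_eq_mul, ← Finset.mul_sum, hcol ℓ, mul_zero]

theorem one_vecMul_eq_zero (hL : IsGraphLaplacian L) : 1 ᵥ* L = 0 := by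
  funext ℓ
  simpa [vecMul, dotProduct] using hL.2.2 ℓ

theorem exp_mulVec_nonneg (hL : IsGraphLaplacian L) {v : Fin n → ℝ} (hv : ∀ i, 0 ≤ v i)
    (i : Fin n) : 0 ≤ (exp L *ᵥ v) i :=
  Finset.sum_nonneg (s := Finset.univ) fun j _ =>
    mul_nonneg (exp_apply_nonneg_of_offDiag_nonneg hL.1 i j) (hv j)

theorem sum_exp_mulVec (hL : IsGraphLaplacian L) (v : Fin n → ℝ) :
    ∑ i, (exp L *ᵥ v) i = ∑ i, v i := by
  rw [← one_dotProduct, dotProduct_mulVec, vecMul_exp_of_vecMul_eq_zero hL.one_vecMul_eq_zero,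
    one_dotProduct]

end IsGraphLaplacian

theorem expMidpoint_preserves_general
    {d : ℕ}
    (A : (Fin d → ℝ) → Matrix (Fin d) (Fin d) ℝ)
    (hA : ∀ v : Fin d → ℝ, (∀ i, 0 ≤ v i) → IsGraphLaplacian (A v))
    (h : ℝ) (hh : 0 ≤ h)
    (y₀ : Fin d → ℝ) (hy₀ : ∀ i, 0 ≤ y₀ i) (hy₀sum : ∑ i : Fin d, y₀ i = 1)
    (y₁ : Fin d → ℝ)
    (hy₁ : y₁ = NormedSpace.exp
      (h • A (NormedSpace.exp ((h / 2) • A y₀) *ᵥ y₀)) *ᵥ y₀) :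
    (∀ i, 0 ≤ y₁ i) ∧ ∑ i : Fin d, y₁ i = 1 := by
  have hmid := ((hA y₀ hy₀).smul (by positivity : 0 ≤ h / 2)).exp_mulVec_nonneg hy₀
  have hL := (hA _ hmid).smul hh
  subst hy₁
  exact ⟨hL.exp_mulVec_nonneg hy₀, (hL.sum_exp_mulVec y₀).trans hy₀sum⟩

/-- The second-order exponential midpoint (Magnus) update preserves positivity
and mass unconditionally. -/
theorem expMidpoint_preserves
    {d : ℕ} (hd : 1 ≤ d)
    (A : (Fin d → ℝ) → Matrix (Fin d) (Fin d) ℝ)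
    (hA : ∀ v : Fin d → ℝ, (∀ i, 0 ≤ v i) → IsGraphLaplacian (A v))
    (h : ℝ) (hh : 0 ≤ h)
    (y₀ : Fin d → ℝ) (hy₀ : ∀ i, 0 ≤ y₀ i) (hy₀sum : ∑ i : Fin d, y₀ i = 1)
    (y₁ : Fin d → ℝ)
    (hy₁ : y₁ = NormedSpace.exp
      (h • A (NormedSpace.exp ((h / 2) • A y₀) *ᵥ y₀)) *ᵥ y₀) :
    (∀ i, 0 ≤ y₁ i) ∧ ∑ i : Fin d, y₁ i = 1 :=
  expMidpoint_preserves_general A hA h hh y₀ hy₀ hy₀sum y₁ hy₁
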